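/- arXiv:1608.06077 — 5 statements merged into one kernel-verified Lean document; each statement's English description precedes it below -/
import Mathlib

section
/- Let L be a complex linear subspace of ℂ^m and let conj(L) denote its image under coordinatewise complex conjugation. Then the real dimension of the image of L under the real-linear projection Re : ℂ^m → ℝ^m (taking real parts coordinatewise) equals 2·dim_ℂ(L) − dim_ℂ(L ∩ conj(L)). -/
/-- The coordinatewise real-part map `ℂ^m → ℝ^m` as an `ℝ`-linear map. -/
noncomputable def reMap (m : ℕ) : (Fin m → ℂ) →ₗ[ℝ] (Fin m → ℝ) :=
  LinearMap.pi fun i => Complex.reLm.comp (LinearMap.proj i)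

/-- The image of a complex subspace `L ⊆ ℂ^m` under coordinatewise complex conjugation,
as a complex subspace (described as `{v | star v ∈ L}`, which equals `star '' L`). -/
noncomputable def conjSubmodule {m : ℕ} (L : Submodule ℂ (Fin m → ℂ)) :
    Submodule ℂ (Fin m → ℂ) where
  carrier := {v | star v ∈ L}
  add_mem' := by
    intro a b ha hb
    simpa [star_add] using L.add_mem ha hb
  zero_mem' := by simp
  smul_mem' := by
    intro c v hv
    simpa [star_smul] using L.smul_mem (star c) hv

/-! By rank–nullity for `Re` on `L`, a real space of dimension `2 · dim_ℂ L`, it suffices to see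
that the purely imaginary vectors of `L` form a real space of dimension `dim_ℂ (L ∩ conj L)`.
A purely imaginary vector satisfies `conj v = -v`, so it lies in `M = L ∩ conj L`; and the
conjugation-stable space `M` splits over `ℝ` as `K ⊕ i·K`, where `K` is its space of purely
imaginary vectors and `i·K` its space of real vectors. -/

open Module Submodule LinearMap

lemma finrank_map_add_finrank_inf_ker {K V W : Type*} [Field K] [AddCommGroup V]
    [Module K V] [AddCommGroup W] [Module K W] [FiniteDimensional K V]
    (f : V →ₗ[K] W) (p : Submodule K V) :
    finrank K (p.map f) + finrank K (p ⊓ ker f : Submodule K V) = finrank K p := by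
  rw [← (comapSubtypeEquivOfLe (inf_le_left : p ⊓ ker f ≤ p)).finrank_eq, comap_inf,
    comap_subtype_self, top_inf_eq, ← ker_domRestrict, ← range_domRestrict]
  exact (f.domRestrict p).finrank_range_add_finrank_ker

lemma Complex.star_eq_neg_iff_re_eq_zero {z : ℂ} : star z = -z ↔ z.re = 0 := by
  simp [Complex.ext_iff, eq_neg_iff_add_eq_zero, ← two_mul]

lemma mem_ker_reMap_iff {m : ℕ} {v : Fin m → ℂ} : v ∈ ker (reMap m) ↔ star v = -v := by
  simp only [mem_ker, funext_iff, Pi.star_apply, Pi.neg_apply,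
    Complex.star_eq_neg_iff_re_eq_zero]
  rfl

lemma restrictScalars_inf_ker_reMap {m : ℕ} (L : Submodule ℂ (Fin m → ℂ)) :
    L.restrictScalars ℝ ⊓ ker (reMap m)
      = (L ⊓ conjSubmodule L).restrictScalars ℝ ⊓ ker (reMap m) := by
  ext v
  simp only [mem_inf, restrictScalars_mem, mem_ker_reMap_iff]
  constructor
  · rintro ⟨hv, hstar⟩
    exact ⟨⟨hv, show star v ∈ L by rw [hstar]; exact L.neg_mem hv⟩, hstar⟩
  · rintro ⟨⟨hv, -⟩, hstar⟩
    exact ⟨hv, hstar⟩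

lemma star_mem_inf_conjSubmodule {m : ℕ} (L : Submodule ℂ (Fin m → ℂ)) {v : Fin m → ℂ}
    (hv : v ∈ L ⊓ conjSubmodule L) : star v ∈ L ⊓ conjSubmodule L :=
  ⟨hv.2, show star (star v) ∈ L by rw [star_star]; exact hv.1⟩

noncomputable def mulI (m : ℕ) : (Fin m → ℂ) ≃ₗ[ℝ] (Fin m → ℂ) :=
  (LinearEquiv.smulOfNeZero ℂ (Fin m → ℂ) Complex.I Complex.I_ne_zero).restrictScalars ℝ

lemma mulI_apply {m : ℕ} (v : Fin m → ℂ) : mulI m v = Complex.I • v := rfl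

lemma star_mulI {m : ℕ} (v : Fin m → ℂ) : star (mulI m v) = -mulI m (star v) := by
  simp [mulI_apply, star_smul]

section ConjStable

variable {m : ℕ} {M : Submodule ℂ (Fin m → ℂ)}

lemma inf_ker_reMap_inf_map_mulI :
    M.restrictScalars ℝ ⊓ ker (reMap m)
      ⊓ (M.restrictScalars ℝ ⊓ ker (reMap m)).map (mulI m : (Fin m → ℂ) →ₗ[ℝ] _) = ⊥ := by
  rw [eq_bot_iff]
  rintro _ ⟨⟨-, hv⟩, u, ⟨-, hu⟩, rfl⟩
  rw [SetLike.mem_coe, mem_ker_reMap_iff] at hv hu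
  have hreal : star (mulI m u) = mulI m u := by rw [star_mulI, hu, map_neg, neg_neg]
  rw [mem_bot, ← self_eq_neg, ← hv]
  exact hreal.symm

lemma inf_ker_reMap_sup_map_mulI (hM : ∀ v ∈ M, star v ∈ M) :
    M.restrictScalars ℝ ⊓ ker (reMap m)
      ⊔ (M.restrictScalars ℝ ⊓ ker (reMap m)).map (mulI m : (Fin m → ℂ) →ₗ[ℝ] _)
      = M.restrictScalars ℝ := by
  refine le_antisymm (sup_le inf_le_left ?_) fun v hv => ?_
  · rintro _ ⟨u, ⟨hu, -⟩, rfl⟩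
    exact M.smul_mem Complex.I hu
  set u : Fin m → ℂ := (-(2⁻¹ * Complex.I)) • (v + star v)
  refine mem_sup.2 ⟨(2⁻¹ : ℂ) • (v - star v), ⟨?_, ?_⟩, mulI m u, ⟨u, ⟨?_, ?_⟩, rfl⟩, ?_⟩
  · exact M.smul_mem _ (M.sub_mem hv (hM v hv))
  · rw [SetLike.mem_coe, mem_ker_reMap_iff, star_smul, star_sub, star_star, ← neg_sub,
      smul_neg]
    simp
  · exact M.smul_mem _ (M.add_mem hv (hM v hv))
  · rw [SetLike.mem_coe, mem_ker_reMap_iff]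
    simp [u, star_smul]
  · rw [mulI_apply, smul_smul, show Complex.I * -(2⁻¹ * Complex.I) = 2⁻¹ by ring_nf; norm_num]
    module

lemma finrank_inf_ker_reMap_of_star_mem (hM : ∀ v ∈ M, star v ∈ M) :
    finrank ℝ (M.restrictScalars ℝ ⊓ ker (reMap m) : Submodule ℝ (Fin m → ℂ)) = finrank ℂ M := by
  have h := finrank_sup_add_finrank_inf_eq (M.restrictScalars ℝ ⊓ ker (reMap m))
    ((M.restrictScalars ℝ ⊓ ker (reMap m)).map (mulI m : (Fin m → ℂ) →ₗ[ℝ] _))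
  rw [inf_ker_reMap_sup_map_mulI hM, inf_ker_reMap_inf_map_mulI, finrank_bot,
    LinearEquiv.finrank_map_eq] at h
  have : finrank ℝ (M.restrictScalars ℝ) = 2 * finrank ℂ M := finrank_real_of_complex M
  omega

end ConjStable


theorem stmt_0 {m : ℕ} (L : Submodule ℂ (Fin m → ℂ)) :
    Module.finrank ℝ ↥((L.restrictScalars ℝ).map (reMap m))
      + Module.finrank ℂ ↥(L ⊓ conjSubmodule L) = 2 * Module.finrank ℂ ↥L := by
  have h := finrank_map_add_finrank_inf_ker (reMap m) (L.restrictScalars ℝ)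
  rwa [restrictScalars_inf_ker_reMap,
    finrank_inf_ker_reMap_of_star_mem fun _ => star_mem_inf_conjSubmodule L,
    show finrank ℝ (L.restrictScalars ℝ) = 2 * finrank ℂ L from finrank_real_of_complex L] at h
end

section
/- Let f : ℝ^m → ℝ be a convex function, and let C, C′ ⊆ ℝ^m be open convex sets on which f is affine: f(x) = ⟨a, x⟩ + a₀ on C and f(x) = ⟨a′, x⟩ + a₀′ on C′. Suppose a vector v ∈ ℝ^m belongs to both recession cones, i.e. C + t v ⊆ C and C′ + t v ⊆ C′ for all t ≥ 0. Then ⟨a, v⟩ = ⟨a′, v⟩. -/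
/-!
A convex function `f` lies above every affine function it agrees with on an open set: subtracting
that affine function leaves a convex function with a local, hence global, minimum `0`. So the
affine piece `g` of `C` is a global minorant of `f`, and along the ray `x' + t v` inside `C'`,
where `f` is the affine piece `g'`, this reads `g ≤ g'` for all `t ≥ 0`. Comparing the growth in
`t` gives `⟪a, v⟫ ≤ ⟪a', v⟫`, and the symmetric argument gives the reverse inequality.
-/

open Filter Set Topology RealInnerProductSpace

lemma nonneg_of_forall_nonneg_add_mul {c d : ℝ} (h : ∀ t : ℝ, 0 ≤ t → 0 ≤ c + t * d) :
    0 ≤ d := by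
  by_contra! hd
  have hpos : 0 < -d := neg_pos.2 hd
  have hlarge := h ((|c| + 1) / -d) (by positivity)
  have hcancel : (|c| + 1) / -d * d = -(|c| + 1) := by
    rw [div_mul_eq_mul_div, div_neg, mul_div_cancel_right₀ _ hd.ne]
  linarith [le_abs_self c]

section

variable {E : Type*} [AddCommGroup E] [Module ℝ E]

lemma LinearMap.le_of_forall_le_on_ray (ℓ ℓ' : E →ₗ[ℝ] ℝ) (c c' : ℝ) (x v : E)
    (h : ∀ t : ℝ, 0 ≤ t → ℓ (x + t • v) + c ≤ ℓ' (x + t • v) + c') :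
    ℓ v ≤ ℓ' v := by
  have hgap : ∀ t : ℝ, 0 ≤ t → 0 ≤ (ℓ' x + c' - (ℓ x + c)) + t * (ℓ' v - ℓ v) := by
    intro t ht
    have := h t ht
    simp only [map_add, map_smul, smul_eq_mul] at this
    linarith
  exact sub_nonneg.1 (nonneg_of_forall_nonneg_add_mul hgap)

variable [TopologicalSpace E] [IsTopologicalAddGroup E] [ContinuousSMul ℝ E]

lemma ConvexOn.add_const_le_of_eventuallyEq {f : E → ℝ} (hf : ConvexOn ℝ univ f)
    (ℓ : E →ₗ[ℝ] ℝ) (c : ℝ) {x : E} (hfx : f =ᶠ[𝓝 x] fun y ↦ ℓ y + c) (y : E) :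
    ℓ y + c ≤ f y := by
  set g : E → ℝ := fun y ↦ ℓ y + c
  have hconv : ConvexOn ℝ univ (f - g) := hf.sub ((ℓ.concaveOn convex_univ).add_const c)
  have hzero : (f - g) x = 0 := sub_eq_zero.2 hfx.eq_of_nhds
  have hmin : IsLocalMin (f - g) x :=
    hfx.mono fun z hz ↦ by simp only [Pi.sub_apply, hz, sub_self, hzero, le_refl]
  simpa only [hzero, Pi.sub_apply, sub_nonneg] using
    IsMinOn.of_isLocalMin_of_convex_univ hmin hconv y

lemma ConvexOn.le_of_eventuallyEq_of_eq_on_ray {f : E → ℝ} (hf : ConvexOn ℝ univ f)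
    (ℓ ℓ' : E →ₗ[ℝ] ℝ) (c c' : ℝ) {x : E} (hfx : f =ᶠ[𝓝 x] fun y ↦ ℓ y + c) (x' v : E)
    (hray : ∀ t : ℝ, 0 ≤ t → f (x' + t • v) = ℓ' (x' + t • v) + c') :
    ℓ v ≤ ℓ' v :=
  ℓ.le_of_forall_le_on_ray ℓ' c c' x' v fun t ht ↦
    hray t ht ▸ hf.add_const_le_of_eventuallyEq ℓ c hfx _

end

theorem stmt_6_general {m : ℕ} (f : EuclideanSpace ℝ (Fin m) → ℝ)
    (hf : ConvexOn ℝ Set.univ f)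
    (C C' : Set (EuclideanSpace ℝ (Fin m)))
    (hCo : IsOpen C) (hCne : C.Nonempty)
    (hC'o : IsOpen C') (hC'ne : C'.Nonempty)
    (a a' : EuclideanSpace ℝ (Fin m)) (a₀ a₀' : ℝ)
    (haff : ∀ x ∈ C, f x = ⟪a, x⟫ + a₀)
    (haff' : ∀ x ∈ C', f x = ⟪a', x⟫ + a₀')
    (v : EuclideanSpace ℝ (Fin m))
    (hv : ∀ x ∈ C, ∀ t : ℝ, 0 ≤ t → x + t • v ∈ C)
    (hv' : ∀ x ∈ C', ∀ t : ℝ, 0 ≤ t → x + t • v ∈ C') :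
    ⟪a, v⟫ = ⟪a', v⟫ := by
  obtain ⟨x, hx⟩ := hCne
  obtain ⟨x', hx'⟩ := hC'ne
  have hfx : f =ᶠ[𝓝 x] fun y ↦ innerₛₗ ℝ a y + a₀ := eventuallyEq_of_mem (hCo.mem_nhds hx) haff
  have hfx' : f =ᶠ[𝓝 x'] fun y ↦ innerₛₗ ℝ a' y + a₀' :=
    eventuallyEq_of_mem (hC'o.mem_nhds hx') haff'
  exact le_antisymm
    (hf.le_of_eventuallyEq_of_eq_on_ray _ (innerₛₗ ℝ a') _ _ hfx x' v fun t ht ↦ haff' _ (hv' x' hx' t ht))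
    (hf.le_of_eventuallyEq_of_eq_on_ray _ (innerₛₗ ℝ a) _ _ hfx' x v fun t ht ↦ haff _ (hv x hx t ht))

/-- If a convex function is affine on two open convex sets whose recession cones both contain a
vector `v`, then the two affine pieces have the same directional derivative in direction `v`. -/
theorem stmt_6 {m : ℕ} (f : EuclideanSpace ℝ (Fin m) → ℝ)
    (hf : ConvexOn ℝ Set.univ f)
    (C C' : Set (EuclideanSpace ℝ (Fin m)))
    (hCo : IsOpen C) (hCc : Convex ℝ C) (hCne : C.Nonempty)
    (hC'o : IsOpen C') (hC'c : Convex ℝ C') (hC'ne : C'.Nonempty)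
    (a a' : EuclideanSpace ℝ (Fin m)) (a₀ a₀' : ℝ)
    (haff : ∀ x ∈ C, f x = ⟪a, x⟫ + a₀)
    (haff' : ∀ x ∈ C', f x = ⟪a', x⟫ + a₀')
    (v : EuclideanSpace ℝ (Fin m))
    (hv : ∀ x ∈ C, ∀ t : ℝ, 0 ≤ t → x + t • v ∈ C)
    (hv' : ∀ x ∈ C', ∀ t : ℝ, 0 ≤ t → x + t • v ∈ C') :
    ⟪a, v⟫ = ⟪a', v⟫ :=
  stmt_6_general f hf C C' hCo hCne hC'o hC'ne a a' a₀ a₀' haff haff' v hv hv'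
end

section
/- Let f : ℝ^m → ℝ be a convex function and define G = {ξ ∈ ℝ^m : the function x ↦ f(x) − ⟨ξ, x⟩ is bounded from below on ℝ^m}. Let D = {ξ ∈ ℝ^m : ∃ x₀, f(x) − f(x₀) ≥ ⟨ξ, x − x₀⟩ for all x} be the union of all subdifferentials of f. Then D ⊆ G and the interior of G is contained in D. -/
/-!
A subgradient `ξ` at `x₀` makes `x₀` a minimiser of `f - ⟪ξ, ·⟫`, which is therefore bounded
below. Conversely, if `ξ` is interior to `G`, then `f - ⟪ξ, ·⟫` stays bounded below after
subtracting `±(ε/2)⟪eᵢ, ·⟫` for every vector `eᵢ` of an orthonormal basis. This bounds each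
`|⟪eᵢ, x⟫|`, hence `‖x‖`, on the sublevel sets, so the continuous (by convexity) function
`f - ⟪ξ, ·⟫` is coercive and attains its minimum at some `x₀`, where `ξ` is a subgradient.
-/

open RealInnerProductSpace Filter Bornology Topology

theorem OrthonormalBasis.norm_le_sum_abs_inner {ι E : Type*} [Fintype ι] [NormedAddCommGroup E]
    [InnerProductSpace ℝ E] (b : OrthonormalBasis ι ℝ E) (x : E) : ‖x‖ ≤ ∑ i, |⟪b i, x⟫| :=
  calc ‖x‖ = ‖∑ i, ⟪b i, x⟫ • b i‖ := by rw [b.sum_repr']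
    _ ≤ ∑ i, ‖⟪b i, x⟫ • b i‖ := norm_sum_le _ _
    _ = ∑ i, |⟪b i, x⟫| := by simp [norm_smul, b.orthonormal.1]

section

variable {E : Type*} [NormedAddCommGroup E] [InnerProductSpace ℝ E]

theorem forall_inner_sub_le_sub_iff {f : E → ℝ} {ξ x₀ : E} :
    (∀ x, f x - f x₀ ≥ ⟪ξ, x - x₀⟫) ↔ ∀ x, f x₀ - ⟪ξ, x₀⟫ ≤ f x - ⟪ξ, x⟫ := by
  simp only [inner_sub_right, ge_iff_le]
  exact forall_congr' fun x => by constructor <;> intro h <;> linarith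

theorem exists_forall_add_abs_inner_le {h : E → ℝ} {u : E}
    (hu : BddBelow (Set.range fun x => h x - ⟪u, x⟫))
    (hnu : BddBelow (Set.range fun x => h x - ⟪-u, x⟫)) :
    ∃ c, ∀ x, c + |⟪u, x⟫| ≤ h x := by
  obtain ⟨c₁, hc₁⟩ := hu
  obtain ⟨c₂, hc₂⟩ := hnu
  refine ⟨min c₁ c₂, fun x => ?_⟩
  have h₁ : c₁ ≤ h x - ⟪u, x⟫ := hc₁ ⟨x, rfl⟩
  have h₂ : c₂ ≤ h x + ⟪u, x⟫ := by simpa [inner_neg_left] using hc₂ ⟨x, rfl⟩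
  rcases abs_cases ⟪u, x⟫ with ⟨habs, _⟩ | ⟨habs, _⟩ <;>
    linarith [min_le_left c₁ c₂, min_le_right c₁ c₂]

variable [FiniteDimensional ℝ E]

theorem tendsto_cobounded_atTop_of_eventually_bddBelow_sub_inner {h : E → ℝ}
    (hh : ∀ᶠ ζ in 𝓝 0, BddBelow (Set.range fun x => h x - ⟪ζ, x⟫)) :
    Tendsto h (cobounded E) atTop := by
  obtain ⟨ε, hε, hball⟩ := Metric.eventually_nhds_iff.1 hh
  set b := stdOrthonormalBasis ℝ E
  have hmem : ∀ (i) (s : ℝ), |s| = ε / 2 → dist (s • b i) 0 < ε := fun i s hs => by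
    simp [norm_smul, b.orthonormal.1, hs, hε]
  have hcoord : ∀ i, ∃ c, ∀ x, c + |⟪(ε / 2) • b i, x⟫| ≤ h x := fun i =>
    exists_forall_add_abs_inner_le (hball (hmem i _ (abs_of_pos (half_pos hε))))
      (by rw [← neg_smul]; exact hball (hmem i _ (by rw [abs_neg, abs_of_pos (half_pos hε)])))
  choose c hc using hcoord
  refine tendsto_atTop.2 fun a => ?_
  have hsub : IsBounded {x | h x < a} := by
    refine isBounded_iff_forall_norm_le.2 ⟨∑ i, (a - c i) / (ε / 2), fun x hx => ?_⟩
    refine (b.norm_le_sum_abs_inner x).trans (Finset.sum_le_sum fun i _ => ?_)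
    have hci := hc i x
    rw [real_inner_smul_left, abs_mul, abs_of_pos (half_pos hε)] at hci
    rw [le_div_iff₀ (half_pos hε)]
    linarith [hx.out]
  filter_upwards [isBounded_def.1 hsub] with x hx
  exact not_lt.1 hx

end

/-- For a convex `f : ℝ^m → ℝ`, the union `D` of all subdifferentials of `f` is contained in
the set `G` of `ξ` for which `f - ⟨ξ,·⟩` is bounded below, and the interior of `G` is
contained in `D`. -/
theorem stmt_9 {m : ℕ} (f : EuclideanSpace ℝ (Fin m) → ℝ)
    (hf : ConvexOn ℝ Set.univ f) :
    ({ξ | ∃ x₀, ∀ x, f x - f x₀ ≥ ⟪ξ, x - x₀⟫} ⊆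
        {ξ | BddBelow (Set.range fun x => f x - ⟪ξ, x⟫)}) ∧
      interior {ξ | BddBelow (Set.range fun x => f x - ⟪ξ, x⟫)} ⊆
        {ξ | ∃ x₀, ∀ x, f x - f x₀ ≥ ⟪ξ, x - x₀⟫} := by
  refine ⟨fun ξ ⟨x₀, hx₀⟩ => ⟨_, Set.forall_mem_range.2 (forall_inner_sub_le_sub_iff.1 hx₀)⟩,
    fun ξ hξ => ?_⟩
  have hshift : ∀ᶠ ζ in 𝓝 0,
      BddBelow (Set.range fun x => (f x - ⟪ξ, x⟫) - ⟪ζ, x⟫) := by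
    have : Tendsto (ξ + ·) (𝓝 0) (𝓝 ξ) := by
      simpa using (continuous_const_add ξ).tendsto 0
    filter_upwards [this.eventually (mem_interior_iff_mem_nhds.1 hξ)] with ζ hζ
    simpa only [sub_sub, inner_add_left] using hζ
  have hcont : Continuous fun x => f x - ⟪ξ, x⟫ :=
    hf.locallyLipschitz.continuous.sub (continuous_const.inner continuous_id)
  obtain ⟨x₀, hx₀⟩ := hcont.exists_forall_le <| by
    rw [← Metric.cobounded_eq_cocompact]
    exact tendsto_cobounded_atTop_of_eventually_bddBelow_sub_inner hshift
  exact ⟨x₀, forall_inner_sub_le_sub_iff.2 hx₀⟩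
end

section
/- Let f : ℝ^m → ℝ be a convex function, v ∈ ℝ^m, and suppose that on an open convex set of the form K + x₀ (with K an open cone and x₀ ∈ ℝ^m) the function f is affine with linear part a, i.e. f(y) = ⟨a, y⟩ + b for y ∈ K + x₀. Then for every u ∈ K, every y ∈ ℝ^m, and every subgradient ξ of f at y, one has ⟨ξ, u⟩ ≤ ⟨a, u⟩. -/
open RealInnerProductSpace Pointwise Filter Topology

/-- Shifting by `w` and scaling by `t⁻¹` sends `w + t • u` to `u + t⁻¹ • w → u`, which lies in the
open set `K`; the cone property then scales back. -/
theorem eventually_add_smul_mem_of_isOpen_of_smul_subset {E : Type*} [NormedAddCommGroup E]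
    [NormedSpace ℝ E] {K : Set E} (hKo : IsOpen K) (hKcone : ∀ t : ℝ, 0 < t → t • K ⊆ K)
    {u : E} (hu : u ∈ K) (w : E) : ∀ᶠ t : ℝ in atTop, w + t • u ∈ K := by
  have hlim : Tendsto (fun t : ℝ => u + t⁻¹ • w) atTop (𝓝 u) := by
    simpa using tendsto_const_nhds.add ((tendsto_inv_atTop_zero (𝕜 := ℝ)).smul_const w)
  filter_upwards [hlim (hKo.mem_nhds hu), eventually_gt_atTop 0] with t hmem ht
  have hscaled : t • (u + t⁻¹ • w) = w + t • u := by
    rw [smul_add, smul_smul, mul_inv_cancel₀ ht.ne', one_smul, add_comm]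
  exact hscaled ▸ hKcone t ht (Set.smul_mem_smul_set hmem)

theorem nonpos_of_eventually_mul_le {δ C : ℝ} (h : ∀ᶠ t : ℝ in atTop, t * δ ≤ C) : δ ≤ 0 := by
  by_contra! hδ
  obtain ⟨t, hle, hgt⟩ := (h.and ((tendsto_id.atTop_mul_const hδ).eventually_gt_atTop C)).exists
  exact hle.not_gt hgt

theorem stmt_10_general {m : ℕ} (f : EuclideanSpace ℝ (Fin m) → ℝ)
    (K : Set (EuclideanSpace ℝ (Fin m)))
    (hKo : IsOpen K)
    (hKcone : ∀ t : ℝ, 0 < t → t • K = K)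
    (x₀ a : EuclideanSpace ℝ (Fin m)) (b : ℝ)
    (haff : ∀ k ∈ K, f (k + x₀) = ⟪a, k + x₀⟫ + b) :
    ∀ u ∈ K, ∀ y ξ, (∀ z, f z - f y ≥ ⟪ξ, z - y⟫) → ⟪ξ, u⟫ ≤ ⟪a, u⟫ := by
  intro u hu y ξ hsub
  have hray := eventually_add_smul_mem_of_isOpen_of_smul_subset hKo
    (fun t ht => (hKcone t ht).subset) hu (y - x₀)
  -- Along the ray `y + t • u`, `f` grows like `t ⟪a, u⟫` but at least like `t ⟪ξ, u⟫`.
  refine sub_nonpos.mp (nonpos_of_eventually_mul_le (C := ⟪a, y⟫ + b - f y) ?_)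
  filter_upwards [hray] with t ht
  have hsub_ray := hsub (y + t • u)
  have haff_ray := haff _ ht
  rw [show y - x₀ + t • u + x₀ = y + t • u by abel] at haff_ray
  rw [haff_ray, add_sub_cancel_left, inner_add_right, inner_smul_right, inner_smul_right]
    at hsub_ray
  linarith [mul_sub t ⟪ξ, u⟫ ⟪a, u⟫]

/-- If a convex `f` is affine with linear part `a` on a translated open convex cone `K + x₀`,
then every subgradient `ξ` of `f` (at any point) satisfies `⟨ξ,u⟩ ≤ ⟨a,u⟩` for all `u ∈ K`. -/
theorem stmt_10 {m : ℕ} (f : EuclideanSpace ℝ (Fin m) → ℝ)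
    (hf : ConvexOn ℝ Set.univ f)
    (K : Set (EuclideanSpace ℝ (Fin m)))
    (hKo : IsOpen K) (hKne : K.Nonempty) (hKconv : Convex ℝ K)
    (hKcone : ∀ t : ℝ, 0 < t → t • K = K)
    (x₀ a : EuclideanSpace ℝ (Fin m)) (b : ℝ)
    (haff : ∀ k ∈ K, f (k + x₀) = ⟪a, k + x₀⟫ + b) :
    ∀ u ∈ K, ∀ y ξ, (∀ z, f z - f y ≥ ⟪ξ, z - y⟫) → ⟪ξ, u⟫ ≤ ⟪a, u⟫ :=
  stmt_10_general f K hKo hKcone x₀ a b haff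
end

section
/- Let f : ℝ^m → ℝ be a convex function, let C ⊆ ℝ^m be a nonempty open convex set on which f is affine with gradient a (f(x) = ⟨a,x⟩ + b on C), let N ⊆ ℝ^m be a compact convex set containing the image of the subdifferential of f, with a ∈ N, and let v ∈ ℝ^m be such that ⟨ξ, v⟩ ≤ ⟨a, v⟩ for every ξ ∈ N (i.e., v ∈ norm_N(a)). If moreover f(y) ≥ ⟨a,y⟩ + b for all y ∈ ℝ^m, then f(x + t v) = ⟨a, x + t v⟩ + b for every x ∈ C and every t ≥ 0. -/
open RealInnerProductSpace

/-!
Take a subgradient `ξ` of `f` at `x + t v`; it exists because the point `(x + t v, f (x + t v))`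
can be separated from the open convex strict epigraph of the continuous convex function `f`.
Then `ξ ∈ N`, so `⟪ξ, v⟫ ≤ ⟪a, v⟫`, and the subgradient inequality tested at `x ∈ C` gives
`f (x + t v) ≤ f x + t ⟪ξ, v⟫ ≤ ⟪a, x + t v⟫ + b`. The global lower bound gives the reverse.
-/

namespace ConvexOn

variable {E : Type*} [TopologicalSpace E] [AddCommGroup E] [IsTopologicalAddGroup E]
  [Module ℝ E] [ContinuousSMul ℝ E] {f : E → ℝ}

theorem exists_clm_sub_le (hf : ConvexOn ℝ Set.univ f) (hfc : Continuous f) (y : E) :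
    ∃ l : StrongDual ℝ E, ∀ z, l (z - y) ≤ f z - f y := by
  set S : Set (E × ℝ) := {p | p.1 ∈ Set.univ ∧ f p.1 < p.2}
  have hSo : IsOpen S := by
    simp only [S, Set.mem_univ, true_and]
    exact isOpen_lt (hfc.comp continuous_fst) continuous_snd
  obtain ⟨L, hL⟩ := geometric_hahn_banach_open_point hf.convex_strict_epigraph hSo
    (by simp [S] : (y, f y) ∉ S)
  have hsplit : ∀ z r, L (z, r) = L (z, 0) + r * L (0, 1) := fun z r => by
    rw [← smul_eq_mul, ← map_smul, ← map_add]; simp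
  have hc : L (0, 1) < 0 := by
    have := hL (y, f y + 1) (by simp)
    rw [hsplit y (f y + 1), hsplit y (f y)] at this
    linarith
  refine ⟨(-L (0, 1))⁻¹ • L.comp (.inl ℝ E ℝ), fun z => ?_⟩
  have hl : ((-L (0, 1))⁻¹ • L.comp (.inl ℝ E ℝ)) (z - y) =
      (L (z, 0) - L (y, 0)) / -L (0, 1) := by
    simp [div_eq_inv_mul, ← map_sub]
  rw [hl]
  refine le_of_forall_pos_lt_add fun ε hε => ?_
  have := hL (z, f z + ε) (by simpa using hε)
  rw [hsplit z, hsplit y (f y)] at this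
  rw [div_lt_iff₀ (neg_pos.2 hc)]
  linarith

theorem exists_inner_sub_le {E : Type*} [NormedAddCommGroup E] [InnerProductSpace ℝ E]
    [CompleteSpace E] {f : E → ℝ} (hf : ConvexOn ℝ Set.univ f) (hfc : Continuous f) (y : E) :
    ∃ ξ : E, ∀ z, ⟪ξ, z - y⟫ ≤ f z - f y := by
  obtain ⟨l, hl⟩ := hf.exists_clm_sub_le hfc y
  exact ⟨(InnerProductSpace.toDual ℝ E).symm l, fun z => by simpa using hl z⟩

end ConvexOn

theorem apply_add_smul_le_of_inner_sub_le {E : Type*} [NormedAddCommGroup E]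
    [InnerProductSpace ℝ E] {f : E → ℝ} {x v ξ a : E} {t : ℝ} (ht : 0 ≤ t)
    (hξ : ∀ z, ⟪ξ, z - (x + t • v)⟫ ≤ f z - f (x + t • v)) (hξv : ⟪ξ, v⟫ ≤ ⟪a, v⟫) :
    f (x + t • v) ≤ f x + t * ⟪a, v⟫ := by
  have hx := hξ x
  rw [sub_add_cancel_left, inner_neg_right, real_inner_smul_right] at hx
  linarith [mul_le_mul_of_nonneg_left hξv ht]

theorem stmt_17_general {m : ℕ} (f : EuclideanSpace ℝ (Fin m) → ℝ)
    (hf : ConvexOn ℝ Set.univ f)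
    (C : Set (EuclideanSpace ℝ (Fin m)))
    (a : EuclideanSpace ℝ (Fin m)) (b : ℝ)
    (haff : ∀ x ∈ C, f x = ⟪a, x⟫ + b)
    (N : Set (EuclideanSpace ℝ (Fin m)))
    (hsub : ∀ y ξ, (∀ z, f z - f y ≥ ⟪ξ, z - y⟫) → ξ ∈ N)
    (v : EuclideanSpace ℝ (Fin m))
    (hv : ∀ ξ ∈ N, ⟪ξ, v⟫ ≤ ⟪a, v⟫)
    (hlb : ∀ y, f y ≥ ⟪a, y⟫ + b) :
    ∀ x ∈ C, ∀ t : ℝ, 0 ≤ t → f (x + t • v) = ⟪a, x + t • v⟫ + b := by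
  intro x hx t ht
  obtain ⟨ξ, hξ⟩ :=
    hf.exists_inner_sub_le (continuousOn_univ.mp (hf.continuousOn isOpen_univ)) (x + t • v)
  have hray := apply_add_smul_le_of_inner_sub_le ht hξ (hv ξ (hsub _ ξ hξ))
  have hinner : ⟪a, x + t • v⟫ = ⟪a, x⟫ + t * ⟪a, v⟫ := by
    rw [inner_add_right, real_inner_smul_right]
  linarith [hlb (x + t • v), haff x hx]

/-- Key step for recession cones of complement components: if a convex `f` is affine with
gradient `a` on a nonempty open convex set `C`, all subgradients of `f` lie in a compact
convex set `N ∋ a`, `v` is in the normal cone to `N` at `a`, and `f ≥ ⟨a,·⟩ + b` globally,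
then `f` stays equal to `⟨a,·⟩ + b` along every ray `x + t v`, `x ∈ C`, `t ≥ 0`. -/
theorem stmt_17 {m : ℕ} (f : EuclideanSpace ℝ (Fin m) → ℝ)
    (hf : ConvexOn ℝ Set.univ f)
    (C : Set (EuclideanSpace ℝ (Fin m)))
    (hCne : C.Nonempty) (hCo : IsOpen C) (hCc : Convex ℝ C)
    (a : EuclideanSpace ℝ (Fin m)) (b : ℝ)
    (haff : ∀ x ∈ C, f x = ⟪a, x⟫ + b)
    (N : Set (EuclideanSpace ℝ (Fin m)))
    (hNcomp : IsCompact N) (hNconv : Convex ℝ N) (haN : a ∈ N)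
    (hsub : ∀ y ξ, (∀ z, f z - f y ≥ ⟪ξ, z - y⟫) → ξ ∈ N)
    (v : EuclideanSpace ℝ (Fin m))
    (hv : ∀ ξ ∈ N, ⟪ξ, v⟫ ≤ ⟪a, v⟫)
    (hlb : ∀ y, f y ≥ ⟪a, y⟫ + b) :
    ∀ x ∈ C, ∀ t : ℝ, 0 ≤ t → f (x + t • v) = ⟪a, x + t • v⟫ + b :=
  stmt_17_general f hf C a b haff N hsub v hv hlb
end
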